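/- arXiv:1801.04414 — 5 statements merged into one kernel-verified Lean document; each statement's English description precedes it below -/
import Mathlib

section
/- Let X_1, ..., X_n be independent positive random variables with finite second moment, and let X = Σ X_i. Then for any t > 0, Pr[X ≤ E[X] − t] ≤ exp(−t² / (2 Σ_{i=1}^n E[X_i²])). -/
/-!
Chernoff's method for the lower tail. For `x ≥ 0` one has `exp (-x) ≤ 1 - x + x ^ 2 / 2`, so a
nonnegative `Y` satisfies `E[exp (-s Y)] ≤ 1 - s E[Y] + s² E[Y²] / 2 ≤ exp (-s E[Y] + s² E[Y²] / 2)`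
for `s ≥ 0`: only the second moment, not the variance or a range bound, enters. Independence
multiplies these bounds, Markov's inequality for `exp (-s ∑ Xᵢ)` gives
`exp (-s t + s² σ² / 2)` with `σ² = ∑ E[Xᵢ²]`, and `s = t / σ²` optimizes.
-/

open MeasureTheory ProbabilityTheory Finset Real

lemma Real.exp_neg_le_one_sub_add_sq_div_two {x : ℝ} (hx : 0 ≤ x) :
    exp (-x) ≤ 1 - x + x ^ 2 / 2 := by
  have hmono : Monotone fun y : ℝ => 1 - y + y ^ 2 / 2 - exp (-y) := by
    refine monotone_of_hasDerivAt_nonneg (f' := fun y => y - 1 + exp (-y)) (fun y => ?_)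
      (fun y => show 0 ≤ y - 1 + exp (-y) by linarith [one_sub_le_exp_neg y])
    refine ((((hasDerivAt_const y 1).sub (hasDerivAt_id' y)).add
      ((hasDerivAt_pow 2 y).div_const 2)).sub (hasDerivAt_neg' y).exp).congr_deriv ?_
    push_cast
    ring
  simpa using hmono hx

namespace ProbabilityTheory

variable {Ω : Type*} {mΩ : MeasurableSpace Ω} {μ : Measure Ω}

lemma integrable_exp_neg_mul_of_nonneg [IsFiniteMeasure μ] {Y : Ω → ℝ} (hY : 0 ≤ᵐ[μ] Y)
    (hYm : AEMeasurable Y μ) {s : ℝ} (hs : 0 ≤ s) :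
    Integrable (fun ω => exp (-s * Y ω)) μ := by
  refine (integrable_const (1 : ℝ)).mono' (hYm.const_mul (-s)).exp.aestronglyMeasurable ?_
  filter_upwards [hY] with ω hω
  rw [norm_of_nonneg (exp_pos _).le, exp_le_one_iff, neg_mul, neg_nonpos]
  exact mul_nonneg hs hω

lemma mgf_neg_le_exp_of_nonneg [IsProbabilityMeasure μ] {Y : Ω → ℝ} (hY : 0 ≤ᵐ[μ] Y)
    (hL2 : MemLp Y 2 μ) {s : ℝ} (hs : 0 ≤ s) :
    mgf Y μ (-s) ≤ exp (-s * μ[Y] + s ^ 2 / 2 * ∫ ω, Y ω ^ 2 ∂μ) := by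
  have hint : Integrable Y μ := hL2.integrable one_le_two
  have hint_lin : Integrable (fun ω => 1 - s * Y ω) μ := (integrable_const 1).sub (hint.const_mul s)
  have hint_sq : Integrable (fun ω => s ^ 2 / 2 * Y ω ^ 2) μ := hL2.integrable_sq.const_mul _
  calc mgf Y μ (-s) ≤ ∫ ω, (1 - s * Y ω + s ^ 2 / 2 * Y ω ^ 2) ∂μ := by
        refine integral_mono_ae
          (integrable_exp_neg_mul_of_nonneg hY hL2.aestronglyMeasurable.aemeasurable hs)
          (hint_lin.add hint_sq) ?_
        filter_upwards [hY] with ω hω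
        have := exp_neg_le_one_sub_add_sq_div_two (mul_nonneg hs hω)
        rw [← neg_mul] at this
        linarith
    _ = 1 - s * μ[Y] + s ^ 2 / 2 * ∫ ω, Y ω ^ 2 ∂μ := by
        rw [integral_add hint_lin hint_sq, integral_sub (integrable_const 1) (hint.const_mul s),
          integral_const_mul, integral_const_mul, integral_const, probReal_univ, one_smul]
    _ ≤ exp (-s * μ[Y] + s ^ 2 / 2 * ∫ ω, Y ω ^ 2 ∂μ) := by
        linarith [add_one_le_exp (-s * μ[Y] + s ^ 2 / 2 * ∫ ω, Y ω ^ 2 ∂μ)]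

theorem iIndepFun.measureReal_sum_le_sum_integral_sub_le_exp [IsProbabilityMeasure μ]
    {ι : Type*} [Fintype ι] {X : ι → Ω → ℝ} (hindep : iIndepFun X μ)
    (hnonneg : ∀ i, 0 ≤ᵐ[μ] X i) (hL2 : ∀ i, MemLp (X i) 2 μ) (t : ℝ) {s : ℝ} (hs : 0 ≤ s) :
    μ.real {ω | ∑ i, X i ω ≤ ∑ i, μ[X i] - t} ≤
      exp (-s * t + s ^ 2 / 2 * ∑ i, ∫ ω, X i ω ^ 2 ∂μ) := by
  have hXm : ∀ i, AEMeasurable (X i) μ := fun i => (hL2 i).aestronglyMeasurable.aemeasurable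
  have hsum_nonneg : 0 ≤ᵐ[μ] ∑ i, X i := by
    filter_upwards [ae_all_iff.2 hnonneg] with ω hω
    simpa only [Finset.sum_apply, Pi.zero_apply] using sum_nonneg fun i _ => hω i
  have hchernoff := measure_le_le_exp_mul_mgf (∑ i, μ[X i] - t) (neg_nonpos.2 hs)
    (integrable_exp_neg_mul_of_nonneg hsum_nonneg (by fun_prop) hs)
  simp only [Finset.sum_apply] at hchernoff
  calc _ ≤ exp (s * (∑ i, μ[X i] - t)) * ∏ i, mgf (X i) μ (-s) := by
        rwa [neg_neg, hindep.mgf_sum₀ hXm] at hchernoff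
    _ ≤ exp (s * (∑ i, μ[X i] - t)) *
          ∏ i, exp (-s * μ[X i] + s ^ 2 / 2 * ∫ ω, X i ω ^ 2 ∂μ) := by
        gcongr with i
        · exact fun i _ => mgf_nonneg
        · exact mgf_neg_le_exp_of_nonneg (hnonneg i) (hL2 i) hs
    _ = exp (-s * t + s ^ 2 / 2 * ∑ i, ∫ ω, X i ω ^ 2 ∂μ) := by
        rw [← exp_sum, ← exp_add, sum_add_distrib, ← mul_sum, ← mul_sum]
        ring_nf

end ProbabilityTheory

/-- Maurer's lower-tail Bernstein-type inequality for sums of independent positive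
random variables with finite second moments. -/
theorem maurer_inequality {Ω : Type*} {mΩ : MeasurableSpace Ω}
    (μ : Measure Ω) [IsProbabilityMeasure μ]
    (n : ℕ) (X : Fin n → Ω → ℝ)
    (hindep : iIndepFun X μ)
    (hpos : ∀ i, ∀ᵐ ω ∂μ, 0 < X i ω)
    (hL2 : ∀ i, MemLp (X i) 2 μ)
    (t : ℝ) (ht : 0 < t) :
    μ {ω | ∑ i, X i ω ≤ (∑ i, ∫ ω, X i ω ∂μ) - t} ≤
      ENNReal.ofReal (Real.exp (-(t ^ 2) / (2 * ∑ i, ∫ ω, (X i ω) ^ 2 ∂μ))) := by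
  set σ2 := ∑ i, ∫ ω, X i ω ^ 2 ∂μ
  have hnonneg : ∀ i, 0 ≤ᵐ[μ] X i := fun i => (hpos i).mono fun _ h => h.le
  have hσ2_nonneg : 0 ≤ σ2 := sum_nonneg fun i _ => integral_nonneg fun ω => sq_nonneg (X i ω)
  rcases hσ2_nonneg.eq_or_lt with hσ2 | hσ2
  · -- dividing by `σ2 = 0` gives `0`, so the bound is `exp 0 = 1`
    simpa [← hσ2] using prob_le_one (μ := μ)
  rw [ENNReal.le_ofReal_iff_toReal_le (measure_ne_top _ _) (exp_pos _).le]
  calc _ ≤ exp (-(t / σ2) * t + (t / σ2) ^ 2 / 2 * σ2) :=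
        hindep.measureReal_sum_le_sum_integral_sub_le_exp hnonneg hL2 t (by positivity)
    _ = exp (-(t ^ 2) / (2 * σ2)) := by
        congr 1
        field_simp
        ring
end

section
/- Let a ∈ R^n be a fixed vector and let X_1, ..., X_n be standard Gaussian random variables (possibly dependent). For any 1 ≤ p ≤ 2, there exists a constant C_p > 1 depending only on p such that with probability at least 0.99, (Σ_{i=1}^n |a_i X_i|^p)^(1/p) lies in the interval [C_p^{-1} ‖a‖_p, C_p ‖a‖_p]. -/
open MeasureTheory ProbabilityTheory Finset Real
open scoped ENNReal NNReal

/-!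
Write `W = ∑ |aᵢ|^p` and `S = ∑ |aᵢ|^p |Xᵢ|^p`. Only the marginal laws matter, through linearity
of expectation and Markov's inequality, so the dependence between the `Xᵢ` is irrelevant.
Since `|x|^p ≤ 1 + x²`, `𝔼 S ≤ 2W`, hence `S < 800 W` outside an event of probability `1/400`.
A standard Gaussian density is at most `1/2`, so `ℙ(|Xᵢ| < 1/400) ≤ 1/400`, and the weight
`∑_{|Xᵢ| < 1/400} |aᵢ|^p` stays below `W/2` outside an event of probability `1/200`; there
`S ≥ (1/400)^p W/2 ≥ 800^{-p} W`. Taking `p`-th roots gives the claim with `C = 800`.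
-/

lemma abs_rpow_le_one_add_sq {p : ℝ} (hp0 : 0 ≤ p) (hp2 : p ≤ 2) (x : ℝ) :
    |x| ^ p ≤ 1 + x ^ 2 := by
  rcases le_or_gt |x| 1 with hx | hx
  · linarith [rpow_le_one (abs_nonneg x) hx hp0, sq_nonneg x]
  · calc |x| ^ p ≤ |x| ^ (2 : ℝ) := rpow_le_rpow_of_exponent_le hx.le hp2
      _ = x ^ 2 := by rw [rpow_two, sq_abs]
      _ ≤ 1 + x ^ 2 := by linarith

lemma integral_sq_gaussianReal (v : ℝ≥0) : ∫ x, x ^ 2 ∂gaussianReal 0 v = v := by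
  rw [← variance_id_gaussianReal (μ := 0),
    variance_of_integral_eq_zero aemeasurable_id integral_id_gaussianReal]
  rfl

lemma lintegral_abs_rpow_gaussianReal_le {p : ℝ} (hp0 : 0 ≤ p) (hp2 : p ≤ 2) :
    ∫⁻ x, ENNReal.ofReal (|x| ^ p) ∂gaussianReal 0 1 ≤ ENNReal.ofReal 2 := by
  have hsq : Integrable (fun x : ℝ ↦ x ^ 2) (gaussianReal 0 1) :=
    (memLp_id_gaussianReal 2).integrable_sq
  calc ∫⁻ x, ENNReal.ofReal (|x| ^ p) ∂gaussianReal 0 1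
      ≤ ∫⁻ x, ENNReal.ofReal (1 + x ^ 2) ∂gaussianReal 0 1 :=
        lintegral_mono fun x ↦ ENNReal.ofReal_le_ofReal (abs_rpow_le_one_add_sq hp0 hp2 x)
    _ = ENNReal.ofReal (∫ x, 1 + x ^ 2 ∂gaussianReal 0 1) :=
        (ofReal_integral_eq_lintegral_ofReal ((integrable_const 1).add hsq)
          (ae_of_all _ fun x ↦ by dsimp; positivity)).symm
    _ = ENNReal.ofReal 2 := by
        rw [integral_add (integrable_const 1) hsq, integral_sq_gaussianReal]
        norm_num

lemma gaussianPDFReal_le (μ : ℝ) (v : ℝ≥0) (x : ℝ) :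
    gaussianPDFReal μ v x ≤ (√(2 * π * v))⁻¹ := by
  refine mul_le_of_le_one_right (by positivity) (exp_le_one_iff.mpr ?_)
  exact div_nonpos_of_nonpos_of_nonneg (neg_nonpos.mpr (sq_nonneg _)) (by positivity)

lemma gaussianReal_apply_le (μ : ℝ) {v : ℝ≥0} (hv : v ≠ 0) (s : Set ℝ) :
    gaussianReal μ v s ≤ ENNReal.ofReal (√(2 * π * v))⁻¹ * volume s := by
  rw [gaussianReal_apply μ hv, ← setLIntegral_const]
  exact lintegral_mono fun x ↦ ENNReal.ofReal_le_ofReal (gaussianPDFReal_le μ v x)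

lemma gaussianReal_Ioo_le {δ : ℝ} (hδ : 0 ≤ δ) :
    gaussianReal 0 1 (Set.Ioo (-δ) δ) ≤ ENNReal.ofReal δ := by
  have h2 : 2 ≤ √(2 * π) := le_sqrt_of_sq_le (by nlinarith [pi_gt_three])
  refine (gaussianReal_apply_le 0 one_ne_zero _).trans ?_
  rw [volume_Ioo, ← ENNReal.ofReal_mul (by positivity)]
  refine ENNReal.ofReal_le_ofReal ?_
  rw [NNReal.coe_one, mul_one, inv_mul_le_iff₀ (by positivity)]
  nlinarith

lemma lintegral_ofReal_indicator_one {α : Type*} {mα : MeasurableSpace α} (ν : Measure α)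
    {s : Set α} (hs : MeasurableSet s) :
    ∫⁻ x, ENNReal.ofReal (s.indicator 1 x) ∂ν = ν s := by
  simp_rw [← lintegral_indicator_one hs]
  congr 1 with x
  by_cases hx : x ∈ s <;> simp [hx]

section IdenticalMarginals

variable {Ω α ι : Type*} {mΩ : MeasurableSpace Ω} {mα : MeasurableSpace α} [Fintype ι]
  {μ : Measure Ω} {ν : Measure α} {X : ι → Ω → α}

lemma lintegral_ofReal_sum_mul_comp (hX : ∀ i, μ.map (X i) = ν) (hν : ν ≠ 0)
    {g : α → ℝ} (hg : Measurable g) (hg0 : ∀ x, 0 ≤ g x) {w : ι → ℝ} (hw : ∀ i, 0 ≤ w i) :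
    ∫⁻ ω, ENNReal.ofReal (∑ i, w i * g (X i ω)) ∂μ
      = ENNReal.ofReal (∑ i, w i) * ∫⁻ x, ENNReal.ofReal (g x) ∂ν := by
  have hXm (i : ι) : AEMeasurable (X i) μ := .of_map_ne_zero (by rwa [hX i])
  have hgm : Measurable fun x ↦ ENNReal.ofReal (g x) := hg.ennreal_ofReal
  have hgX (i : ι) : AEMeasurable (fun ω ↦ ENNReal.ofReal (g (X i ω))) μ :=
    hgm.comp_aemeasurable (hXm i)
  have hsum (ω : Ω) : ENNReal.ofReal (∑ i, w i * g (X i ω))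
      = ∑ i, ENNReal.ofReal (w i) * ENNReal.ofReal (g (X i ω)) := by
    rw [ENNReal.ofReal_sum_of_nonneg fun i _ ↦ mul_nonneg (hw i) (hg0 _)]
    simp_rw [ENNReal.ofReal_mul (hw _)]
  rw [ENNReal.ofReal_sum_of_nonneg fun i _ ↦ hw i, Finset.sum_mul]
  simp_rw [hsum]
  rw [lintegral_finsetSum' _ fun i _ ↦ (hgX i).const_mul _]
  refine Finset.sum_congr rfl fun i _ ↦ ?_
  rw [lintegral_const_mul'' _ (hgX i), ← hX i,
    lintegral_map' hgm.aemeasurable (hXm i)]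

lemma measure_mul_sum_le_sum_mul_comp_le (hX : ∀ i, μ.map (X i) = ν) (hν : ν ≠ 0)
    {g : α → ℝ} (hg : Measurable g) (hg0 : ∀ x, 0 ≤ g x) {m : ℝ}
    (hm : ∫⁻ x, ENNReal.ofReal (g x) ∂ν ≤ ENNReal.ofReal m)
    {w : ι → ℝ} (hw : ∀ i, 0 ≤ w i) (hW : 0 < ∑ i, w i) {c : ℝ} (hc : 0 < c) :
    μ {ω | c * ∑ i, w i ≤ ∑ i, w i * g (X i ω)} ≤ ENNReal.ofReal (m / c) := by
  have hXm (i : ι) : AEMeasurable (X i) μ := .of_map_ne_zero (by rwa [hX i])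
  have hcW : 0 < c * ∑ i, w i := mul_pos hc hW
  have hset : {ω | c * ∑ i, w i ≤ ∑ i, w i * g (X i ω)}
      = {ω | ENNReal.ofReal (c * ∑ i, w i) ≤ ENNReal.ofReal (∑ i, w i * g (X i ω))} := by
    ext ω
    exact (ENNReal.ofReal_le_ofReal_iff
      (Finset.sum_nonneg fun i _ ↦ mul_nonneg (hw i) (hg0 _))).symm
  rw [hset]
  refine (meas_ge_le_lintegral_div ?_ (by simpa using hcW) ENNReal.ofReal_ne_top).trans ?_
  · exact (Finset.aemeasurable_fun_sum _ fun i _ ↦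
      ((hg.comp_aemeasurable (hXm i)).const_mul (w i))).ennreal_ofReal
  rw [lintegral_ofReal_sum_mul_comp hX hν hg hg0 hw]
  refine ENNReal.div_le_of_le_mul ?_
  calc ENNReal.ofReal (∑ i, w i) * ∫⁻ x, ENNReal.ofReal (g x) ∂ν
      ≤ ENNReal.ofReal (∑ i, w i) * ENNReal.ofReal m := by gcongr
    _ = ENNReal.ofReal (m / c) * ENNReal.ofReal (c * ∑ i, w i) := by
        rw [← ENNReal.ofReal_mul hW.le, ← ENNReal.ofReal_mul' hcW.le]
        congr 1
        field_simp

end IdenticalMarginals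

lemma ofReal_one_sub_le_measure_of_compl_subset {Ω : Type*} {mΩ : MeasurableSpace Ω}
    {μ : Measure Ω} [IsProbabilityMeasure μ] {B E : Set Ω} {ε : ℝ} (hε : 0 ≤ ε)
    (hB : μ B ≤ ENNReal.ofReal ε) (hBE : Bᶜ ⊆ E) :
    ENNReal.ofReal (1 - ε) ≤ μ E := by
  rw [ENNReal.ofReal_sub _ hε, ENNReal.ofReal_one, tsub_le_iff_left]
  calc 1 = μ (B ∪ Bᶜ) := by rw [Set.union_compl_self, measure_univ]
    _ ≤ μ B + μ E := (measure_union_le _ _).trans (add_le_add le_rfl (measure_mono hBE))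
    _ ≤ ENNReal.ofReal ε + μ E := add_le_add hB le_rfl

lemma rpow_one_div_mem_Icc {p K S W : ℝ} (hp : 0 < p) (hK : 0 < K) (hS : 0 ≤ S) (hW : 0 ≤ W)
    (h : S ∈ Set.Icc (K⁻¹ ^ p * W) (K ^ p * W)) :
    S ^ (1 / p) ∈ Set.Icc (K⁻¹ * W ^ (1 / p)) (K * W ^ (1 / p)) := by
  have hroot {L : ℝ} (hL : 0 < L) : (L ^ p * W) ^ (1 / p) = L * W ^ (1 / p) := by
    rw [mul_rpow (by positivity) hW, one_div, rpow_rpow_inv hL.le hp.ne']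
  rw [← hroot hK, ← hroot (inv_pos.mpr hK)]
  exact ⟨rpow_le_rpow (by positivity) h.1 (by positivity),
    rpow_le_rpow hS h.2 (by positivity)⟩

lemma rpow_mul_one_sub_indicator_le {p δ : ℝ} (hp : 0 ≤ p) (hδ : 0 ≤ δ) (x : ℝ) :
    δ ^ p * (1 - (Set.Ioo (-δ) δ).indicator 1 x) ≤ |x| ^ p := by
  by_cases hx : x ∈ Set.Ioo (-δ) δ
  · simp [hx, rpow_nonneg (abs_nonneg x)]
  · have hδx : δ ≤ |x| := by
      rw [Set.mem_Ioo, ← abs_lt] at hx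
      exact not_lt.mp hx
    simpa [hx] using rpow_le_rpow hδ hδx hp

lemma sum_mul_abs_rpow_mem_Icc {ι : Type*} [Fintype ι] {p K : ℝ} (hp : 1 ≤ p) (hK : 1 ≤ K)
    {w x : ι → ℝ} (hw : ∀ i, 0 ≤ w i) (hlarge : ∑ i, w i * |x i| ^ p < K * ∑ i, w i)
    (hsmall : ∑ i, w i * (Set.Ioo (-(2 / K)) (2 / K)).indicator 1 (x i) < 2⁻¹ * ∑ i, w i) :
    ∑ i, w i * |x i| ^ p ∈ Set.Icc (K⁻¹ ^ p * ∑ i, w i) (K ^ p * ∑ i, w i) := by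
  set W := ∑ i, w i
  have hW : 0 ≤ W := Finset.sum_nonneg fun i _ ↦ hw i
  have hp0 : 0 ≤ p := by linarith
  have hδ : 0 ≤ 2 / K := by positivity
  have hlower : (2 / K) ^ p * (W - ∑ i, w i * (Set.Ioo (-(2 / K)) (2 / K)).indicator 1 (x i))
      ≤ ∑ i, w i * |x i| ^ p := by
    rw [← Finset.sum_sub_distrib, Finset.mul_sum]
    refine Finset.sum_le_sum fun i _ ↦ ?_
    rw [← mul_one_sub, mul_left_comm]
    exact mul_le_mul_of_nonneg_left (rpow_mul_one_sub_indicator_le hp0 hδ _) (hw i)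
  have hhalf : (2⁻¹ : ℝ) ^ p ≤ 2⁻¹ := by
    simpa using rpow_le_rpow_of_exponent_ge (by norm_num : (0 : ℝ) < 2⁻¹) (by norm_num) hp
  constructor
  · calc K⁻¹ ^ p * W = (2 / K) ^ p * (2⁻¹ ^ p * W) := by
          rw [← mul_assoc, ← mul_rpow hδ (by norm_num)]
          field_simp
      _ ≤ (2 / K) ^ p * (W - ∑ i, w i * (Set.Ioo (-(2 / K)) (2 / K)).indicator 1 (x i)) := by
          gcongr
          nlinarith
      _ ≤ ∑ i, w i * |x i| ^ p := hlower
  · calc ∑ i, w i * |x i| ^ p ≤ K * W := hlarge.le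
      _ ≤ K ^ p * W := by
          gcongr
          simpa using rpow_le_rpow_of_exponent_le hK hp

/-- For possibly dependent standard Gaussians `X i`, the weighted `ℓ_p` sum
`(∑ |a_i X_i|^p)^{1/p}` is within a constant factor (depending only on `p`)
of `‖a‖_p` with probability at least 0.99. -/
theorem weighted_gaussian_pnorm (p : ℝ) (hp : 1 ≤ p) (hp2 : p ≤ 2) :
    ∃ C : ℝ, 1 < C ∧
      ∀ {Ω : Type} {mΩ : MeasurableSpace Ω} (μ : Measure Ω), IsProbabilityMeasure μ →
        ∀ (n : ℕ) (a : Fin n → ℝ) (X : Fin n → Ω → ℝ),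
          (∀ i, Measure.map (X i) μ = gaussianReal 0 1) →
          ENNReal.ofReal 0.99 ≤
            μ {ω | (∑ i, |a i * X i ω| ^ p) ^ (1 / p) ∈
                Set.Icc (C⁻¹ * (∑ i, |a i| ^ p) ^ (1 / p))
                        (C * (∑ i, |a i| ^ p) ^ (1 / p))} := by
  refine ⟨800, by norm_num, ?_⟩
  intro Ω _ μ _ n a X hX
  have hp0 : 0 < p := by linarith
  have hw (i : Fin n) : 0 ≤ |a i| ^ p := rpow_nonneg (abs_nonneg _) p
  simp_rw [abs_mul, mul_rpow (abs_nonneg _) (abs_nonneg _)]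
  set W := ∑ i, |a i| ^ p
  set S : Ω → ℝ := fun ω ↦ ∑ i, |a i| ^ p * |X i ω| ^ p
  have hW0 : 0 ≤ W := Finset.sum_nonneg fun i _ ↦ hw i
  have hgood (ω : Ω) (h : S ω ∈ Set.Icc ((800 : ℝ)⁻¹ ^ p * W) (800 ^ p * W)) :
      S ω ^ (1 / p) ∈ Set.Icc ((800 : ℝ)⁻¹ * W ^ (1 / p)) (800 * W ^ (1 / p)) :=
    rpow_one_div_mem_Icc hp0 (by norm_num)
      (Finset.sum_nonneg fun i _ ↦ mul_nonneg (hw i) (by positivity)) hW0 h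
  rcases hW0.eq_or_lt with hW | hW
  · refine (ofReal_one_sub_le_measure_of_compl_subset (B := ∅) (ε := 0.01) (by norm_num)
      (by simp) fun ω _ ↦ hgood ω ?_).trans_eq' (by norm_num)
    have hterm (i : Fin n) : |a i| ^ p = 0 :=
      (Finset.sum_eq_zero_iff_of_nonneg fun i _ ↦ hw i).mp hW.symm i (mem_univ i)
    simp [S, hterm, ← hW]
  have hν : gaussianReal 0 1 ≠ 0 := IsProbabilityMeasure.ne_zero _
  have hlarge := measure_mul_sum_le_sum_mul_comp_le hX hν (g := fun x ↦ |x| ^ p)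
    (by fun_prop) (fun x ↦ by positivity)
    (lintegral_abs_rpow_gaussianReal_le hp0.le hp2) hw hW (c := 800) (by norm_num)
  have hsmall := measure_mul_sum_le_sum_mul_comp_le hX hν
    (g := (Set.Ioo (-(2 / 800 : ℝ)) (2 / 800)).indicator 1)
    (measurable_one.indicator measurableSet_Ioo) (Set.indicator_nonneg fun _ _ ↦ zero_le_one)
    ((lintegral_ofReal_indicator_one _ measurableSet_Ioo).trans_le
      (gaussianReal_Ioo_le (by norm_num))) hw hW (c := 2⁻¹) (by norm_num)
  have hbad := (measure_union_le _ _).trans (add_le_add hlarge hsmall)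
  rw [← ENNReal.ofReal_add (by norm_num) (by norm_num)] at hbad
  refine (ENNReal.ofReal_le_ofReal (by norm_num)).trans
    (ofReal_one_sub_le_measure_of_compl_subset (by norm_num) hbad fun ω hω ↦ hgood ω ?_)
  simp only [Set.mem_compl_iff, Set.mem_union, Set.mem_ofPred_eq, not_or, not_le] at hω
  exact sum_mul_abs_rpow_mem_Icc hp (by norm_num) hw hω.1 hω.2
end

section
/- Let X_1, ..., X_n be independent standard Cauchy random variables. There exists a universal constant U_1 such that for all n ≥ 3, Pr[Σ_{i=1}^n |X_i| ≤ U_1 · n · log n] ≥ 1 − (log log n)/(log n). -/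
/-!
Truncate at level `K = 400 n log n`. With probability at least `1 - n / K` no `|X i|` exceeds
`K`, and then `∑ |X i| = ∑ min |X i| K`. The truncated variables have mean `O(log K) = O(log n)`
and second moment `O(K)`, so by Chebyshev their sum exceeds `K` with probability
`O(n K / (n log n)²) = O(1 / log n)`. Both error terms are small multiples of `1 / log n`, which
stays below `log log n / log n` for `n ≥ 3`.
-/

open MeasureTheory ProbabilityTheory Finset

/-- The standard Cauchy distribution on ℝ, with density `1/(π(1+x²))`. -/
noncomputable def stdCauchy : Measure ℝ :=
  MeasureTheory.volume.withDensity fun x => ENNReal.ofReal (1 / (Real.pi * (1 + x ^ 2)))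

open Real Set

lemma arctan_le_self {x : ℝ} (hx : 0 ≤ x) : arctan x ≤ x := by
  simpa only [tan_arctan] using le_tan (arctan_nonneg.2 hx) (arctan_lt_pi_div_two x)

lemma mul_arctan_inv_le_one {K : ℝ} (hK : 0 < K) : K * arctan K⁻¹ ≤ 1 :=
  calc K * arctan K⁻¹ ≤ K * K⁻¹ := by gcongr; exact arctan_le_self (inv_nonneg.2 hK.le)
    _ = 1 := mul_inv_cancel₀ hK.ne'

lemma Continuous.div_pi_mul_one_add_sq {f : ℝ → ℝ} (hf : Continuous f) :
    Continuous fun y => f y / (π * (1 + y ^ 2)) :=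
  hf.div (by fun_prop) fun y => by positivity

lemma integrable_div_pi_mul_one_add_sq (c : ℝ) :
    Integrable fun y : ℝ => c / (π * (1 + y ^ 2)) := by
  convert integrable_inv_one_add_sq.const_mul (c / π) using 2 with y
  field_simp

lemma setIntegral_Ioi_div_pi_mul_one_add_sq {K : ℝ} (hK : 0 < K) (c : ℝ) :
    ∫ y in Ioi K, c / (π * (1 + y ^ 2)) = c * (arctan K⁻¹ / π) := by
  have : ∀ y : ℝ, c / (π * (1 + y ^ 2)) = c / π * (1 + y ^ 2)⁻¹ := fun y => by field_simp
  simp_rw [this]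
  rw [integral_const_mul, integral_Ioi_inv_one_add_sq, arctan_inv_of_pos hK]
  ring

lemma integral_self_div_pi_mul_one_add_sq (K : ℝ) :
    ∫ y in 0..K, y / (π * (1 + y ^ 2)) = log (1 + K ^ 2) / (2 * π) := by
  have hderiv : ∀ y ∈ uIcc 0 K,
      HasDerivAt (fun y => log (1 + y ^ 2) / (2 * π)) (y / (π * (1 + y ^ 2))) y := by
    intro y _
    have hy : 1 + y ^ 2 ≠ 0 := by positivity
    refine ((((hasDerivAt_pow 2 y).const_add 1).log hy).div_const (2 * π)).congr_deriv ?_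
    field_simp
    ring
  rw [intervalIntegral.integral_eq_sub_of_hasDerivAt hderiv
    (continuous_id.div_pi_mul_one_add_sq.intervalIntegrable _ _)]
  simp

lemma stdCauchy_eq_cauchyMeasure : stdCauchy = cauchyMeasure 0 1 := by
  rw [cauchyMeasure_of_scale_ne_zero 0 one_ne_zero, stdCauchy]
  congr with x
  simp [cauchyPDF, cauchyPDFReal, add_comm, mul_comm]

instance : IsProbabilityMeasure stdCauchy := stdCauchy_eq_cauchyMeasure ▸ inferInstance

lemma integral_stdCauchy (g : ℝ → ℝ) :
    ∫ x, g x ∂stdCauchy = ∫ x, g x / (π * (1 + x ^ 2)) := by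
  rw [stdCauchy, integral_withDensity_eq_integral_toReal_smul (by fun_prop)
    (ae_of_all _ fun _ => ENNReal.ofReal_lt_top)]
  congr with x
  rw [ENNReal.toReal_ofReal (by positivity), smul_eq_mul]
  ring

lemma integral_stdCauchy_comp_abs (h : ℝ → ℝ) :
    ∫ x, h |x| ∂stdCauchy = 2 * ∫ y in Ioi 0, h y / (π * (1 + y ^ 2)) := by
  rw [integral_stdCauchy, ← integral_comp_abs (f := fun y => h y / (π * (1 + y ^ 2)))]
  simp_rw [sq_abs]

lemma measureReal_stdCauchy_abs_gt {K : ℝ} (hK : 0 < K) :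
    stdCauchy.real {x | K < |x|} = 2 * (arctan K⁻¹ / π) := by
  rw [← integral_indicator_one (measurableSet_lt measurable_const measurable_abs)]
  have hind : ∀ y, (Ioi K).indicator 1 y / (π * (1 + y ^ 2)) =
      (Ioi K).indicator (fun y => 1 / (π * (1 + y ^ 2))) y := fun y => by
    by_cases hy : y ∈ Ioi K <;> simp [hy]
  calc ∫ x, {x : ℝ | K < |x|}.indicator 1 x ∂stdCauchy
      = ∫ x, (Ioi K).indicator 1 |x| ∂stdCauchy := rfl
    _ = 2 * (arctan K⁻¹ / π) := by
      rw [integral_stdCauchy_comp_abs, integral_congr_ae (ae_of_all _ hind),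
        integral_indicator measurableSet_Ioi, Measure.restrict_restrict measurableSet_Ioi,
        Ioi_inter_Ioi, max_eq_left hK.le, setIntegral_Ioi_div_pi_mul_one_add_sq hK, one_mul]

lemma stdCauchy_abs_gt_le {K : ℝ} (hK : 0 < K) :
    stdCauchy {x | K < |x|} ≤ ENNReal.ofReal K⁻¹ := by
  rw [← ofReal_measureReal, measureReal_stdCauchy_abs_gt hK]
  gcongr
  calc 2 * (arctan K⁻¹ / π) ≤ 2 * (K⁻¹ / 2) := by
        gcongr
        · exact arctan_le_self (inv_nonneg.2 hK.le)
        · exact two_le_pi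
    _ = K⁻¹ := by ring

lemma integral_stdCauchy_min_abs_pow {K : ℝ} (hK : 0 < K) (j : ℕ) :
    ∫ x, min |x| K ^ j ∂stdCauchy =
      2 * ((∫ y in 0..K, y ^ j / (π * (1 + y ^ 2))) + K ^ j * (arctan K⁻¹ / π)) := by
  have hIoc : EqOn (fun y => min y K ^ j / (π * (1 + y ^ 2)))
      (fun y => y ^ j / (π * (1 + y ^ 2))) (Ioc 0 K) := fun y hy => by
    simp only [min_eq_left hy.2]
  have hIoi : EqOn (fun y => min y K ^ j / (π * (1 + y ^ 2)))
      (fun y => K ^ j / (π * (1 + y ^ 2))) (Ioi K) := fun y hy => by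
    simp only [min_eq_right (mem_Ioi.1 hy).le]
  rw [integral_stdCauchy_comp_abs (fun y => min y K ^ j), ← Ioc_union_Ioi_eq_Ioi hK.le,
    setIntegral_union (Ioc_disjoint_Ioi le_rfl) measurableSet_Ioi
      (((continuous_pow j).div_pi_mul_one_add_sq.integrableOn_Ioc).congr_fun hIoc.symm
        measurableSet_Ioc)
      ((integrable_div_pi_mul_one_add_sq _).integrableOn.congr_fun hIoi.symm measurableSet_Ioi),
    setIntegral_congr_fun measurableSet_Ioc hIoc, setIntegral_congr_fun measurableSet_Ioi hIoi,
    setIntegral_Ioi_div_pi_mul_one_add_sq hK, intervalIntegral.integral_of_le hK.le]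

lemma integral_stdCauchy_min_abs_le {K : ℝ} (hK : 0 < K) :
    ∫ x, min |x| K ∂stdCauchy ≤ (log (1 + K ^ 2) + 2) / π := by
  have h := integral_stdCauchy_min_abs_pow hK 1
  simp only [pow_one, integral_self_div_pi_mul_one_add_sq] at h
  rw [h, show 2 * (log (1 + K ^ 2) / (2 * π) + K * (arctan K⁻¹ / π)) =
      (log (1 + K ^ 2) + 2 * (K * arctan K⁻¹)) / π by field_simp]
  gcongr
  linarith [mul_arctan_inv_le_one hK]

lemma integral_stdCauchy_min_abs_sq_le {K : ℝ} (hK : 0 < K) :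
    ∫ x, min |x| K ^ 2 ∂stdCauchy ≤ 4 * K / π := by
  have hbody : ∫ y in 0..K, y ^ 2 / (π * (1 + y ^ 2)) ≤ K / π := by
    calc ∫ y in 0..K, y ^ 2 / (π * (1 + y ^ 2)) ≤ ∫ _ in 0..K, 1 / π := by
          refine intervalIntegral.integral_mono_on hK.le
            ((continuous_pow 2).div_pi_mul_one_add_sq.intervalIntegrable _ _)
            intervalIntegrable_const fun y _ => ?_
          rw [div_le_div_iff₀ (by positivity) pi_pos]
          nlinarith [pi_pos]
      _ = K / π := by simp [div_eq_mul_inv]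
  have htail : K ^ 2 * (arctan K⁻¹ / π) ≤ K / π := by
    rw [show K ^ 2 * (arctan K⁻¹ / π) = K * (K * arctan K⁻¹) / π by ring]
    gcongr
    exact mul_le_of_le_one_right hK.le (mul_arctan_inv_le_one hK)
  rw [integral_stdCauchy_min_abs_pow hK 2, show 4 * K / π = 2 * (K / π + K / π) by ring]
  gcongr

section Probability

variable {Ω ι : Type*} {mΩ : MeasurableSpace Ω} {μ : Measure Ω} [IsProbabilityMeasure μ]
  [Fintype ι]

lemma ofReal_one_sub_le_of_measure_compl_le {s : Set Ω} {p : ℝ} (hp : 0 ≤ p)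
    (h : μ sᶜ ≤ ENNReal.ofReal p) : ENNReal.ofReal (1 - p) ≤ μ s := by
  rw [ENNReal.ofReal_sub _ hp, ENNReal.ofReal_one, tsub_le_iff_right]
  calc 1 = μ (s ∪ sᶜ) := by rw [union_compl_self, measure_univ]
    _ ≤ μ s + μ sᶜ := measure_union_le _ _
    _ ≤ μ s + ENNReal.ofReal p := by gcongr

lemma measure_lt_sum_le_of_pairwise_indepFun {Y : ι → Ω → ℝ} (hY : ∀ i, MemLp (Y i) 2 μ)
    (hind : Pairwise fun i j => Y i ⟂ᵢ[μ] Y j) {t : ℝ} (ht : ∑ i, μ[Y i] < t) :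
    μ {ω | t < ∑ i, Y i ω} ≤
      ENNReal.ofReal ((∑ i, μ[Y i ^ 2]) / (t - ∑ i, μ[Y i]) ^ 2) := by
  have hS : MemLp (∑ i, Y i) 2 μ := memLp_finsetSum' _ fun i _ => hY i
  have hmean : μ[∑ i, Y i] = ∑ i, μ[Y i] := by
    simp only [Finset.sum_apply]
    exact integral_finsetSum _ fun i _ => (hY i).integrable one_le_two
  have hvar : variance (∑ i, Y i) μ ≤ ∑ i, μ[Y i ^ 2] := by
    rw [IndepFun.variance_sum (fun i _ => hY i) fun i _ j _ hij => hind hij]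
    exact sum_le_sum fun i _ => variance_le_expectation_sq (hY i).1
  calc μ {ω | t < ∑ i, Y i ω}
      ≤ μ {ω | t - μ[∑ i, Y i] ≤ |(∑ i, Y i) ω - μ[∑ i, Y i]|} := by
        refine measure_mono fun ω hω => ?_
        simp only [mem_ofPred_eq, Finset.sum_apply] at hω ⊢
        exact (sub_le_sub_right hω.le _).trans (le_abs_self _)
    _ ≤ ENNReal.ofReal (variance (∑ i, Y i) μ / (t - μ[∑ i, Y i]) ^ 2) :=
        meas_ge_le_variance_div_sq hS (by linarith)
    _ ≤ _ := by rw [hmean]; gcongr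

lemma measure_lt_sum_abs_le {X : ι → Ω → ℝ} {ν : Measure ℝ} (hind : iIndepFun X μ)
    (hX : ∀ i, AEMeasurable (X i) μ) (hlaw : ∀ i, μ.map (X i) = ν) {K t : ℝ}
    (ht : Fintype.card ι * ∫ x, min |x| K ∂ν < t) :
    μ {ω | t < ∑ i, |X i ω|} ≤ Fintype.card ι * ν {x | K < |x|} +
      ENNReal.ofReal (Fintype.card ι * (∫ x, min |x| K ^ 2 ∂ν) /
        (t - Fintype.card ι * ∫ x, min |x| K ∂ν) ^ 2) := by
  set Y : ι → Ω → ℝ := fun i ω => min |X i ω| K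
  have hmoment (i : ι) (j : ℕ) : μ[Y i ^ j] = ∫ x, min |x| K ^ j ∂ν := by
    rw [← hlaw i, integral_map (hX i) (Continuous.aestronglyMeasurable (by fun_prop))]
    rfl
  have hmean (i : ι) : μ[Y i] = ∫ x, min |x| K ∂ν := by simpa using hmoment i 1
  have hY (i : ι) : MemLp (Y i) 2 μ := by
    refine MemLp.of_bound (by fun_prop) |K| (ae_of_all _ fun ω => abs_le.2 ⟨?_, ?_⟩)
    · exact le_min ((neg_nonpos.2 (abs_nonneg K)).trans (abs_nonneg _)) (neg_abs_le K)
    · exact (min_le_right _ _).trans (le_abs_self K)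
  have hYind : Pairwise fun i j => Y i ⟂ᵢ[μ] Y j := fun i j hij =>
    (hind.comp (fun _ x => min |x| K) fun _ => by fun_prop).indepFun hij
  have htail (i : ι) : μ (X i ⁻¹' {x | K < |x|}) = ν {x | K < |x|} := by
    rw [← hlaw i, Measure.map_apply_of_aemeasurable (hX i)
      (measurableSet_lt measurable_const measurable_abs)]
  have hsub : {ω | t < ∑ i, |X i ω|} ⊆
      (⋃ i, X i ⁻¹' {x | K < |x|}) ∪ {ω | t < ∑ i, Y i ω} := by
    intro ω hω
    by_cases hbig : ∃ i, K < |X i ω|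
    · obtain ⟨i, hi⟩ := hbig
      exact Or.inl (mem_iUnion.2 ⟨i, hi⟩)
    · push Not at hbig
      right
      simpa [Y, min_eq_left (hbig _)] using hω
  calc μ {ω | t < ∑ i, |X i ω|}
      ≤ μ (⋃ i, X i ⁻¹' {x | K < |x|}) + μ {ω | t < ∑ i, Y i ω} :=
        (measure_mono hsub).trans (measure_union_le _ _)
    _ ≤ ∑ i, μ (X i ⁻¹' {x | K < |x|}) +
          ENNReal.ofReal ((∑ i, μ[Y i ^ 2]) / (t - ∑ i, μ[Y i]) ^ 2) := by
        refine add_le_add (measure_iUnion_fintype_le _ _)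
          (measure_lt_sum_le_of_pairwise_indepFun hY hYind ?_)
        simpa [hmean] using ht
    _ = _ := by simp only [htail, hmoment, hmean, sum_const, card_univ, nsmul_eq_mul]

lemma measure_lt_sum_abs_stdCauchy_le {X : ι → Ω → ℝ} (hind : iIndepFun X μ)
    (hlaw : ∀ i, μ.map (X i) = stdCauchy) {K t : ℝ} (hK : 0 < K)
    (ht : Fintype.card ι * ((log (1 + K ^ 2) + 2) / π) < t) :
    μ {ω | t < ∑ i, |X i ω|} ≤
      ENNReal.ofReal (Fintype.card ι * K⁻¹ + Fintype.card ι * (4 * K / π) /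
        (t - Fintype.card ι * ((log (1 + K ^ 2) + 2) / π)) ^ 2) := by
  have hX (i : ι) : AEMeasurable (X i) μ :=
    aemeasurable_of_map_neZero (by rw [hlaw i]; infer_instance)
  have hm1 := integral_stdCauchy_min_abs_le hK
  have hgap : 0 < t - Fintype.card ι * ((log (1 + K ^ 2) + 2) / π) := sub_pos.2 ht
  calc μ {ω | t < ∑ i, |X i ω|}
      ≤ Fintype.card ι * stdCauchy {x | K < |x|} +
          ENNReal.ofReal (Fintype.card ι * (∫ x, min |x| K ^ 2 ∂stdCauchy) /
            (t - Fintype.card ι * ∫ x, min |x| K ∂stdCauchy) ^ 2) :=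
        measure_lt_sum_abs_le hind hX hlaw ((by gcongr : _ ≤ _).trans_lt ht)
    _ ≤ Fintype.card ι * ENNReal.ofReal K⁻¹ + ENNReal.ofReal (Fintype.card ι * (4 * K / π) /
          (t - Fintype.card ι * ((log (1 + K ^ 2) + 2) / π)) ^ 2) := by
        gcongr
        · exact stdCauchy_abs_gt_le hK
        · exact integral_stdCauchy_min_abs_sq_le hK
    _ = _ := by
        rw [ENNReal.ofReal_add (by positivity) (by positivity), ENNReal.ofReal_mul (by positivity),
          ENNReal.ofReal_natCast]

end Probability

lemma lt_log_of_three_le {x : ℝ} (hx : 3 ≤ x) : 1.0986 < log x :=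
  (log_three_gt_d9.trans_le (log_le_log (by norm_num) hx)).trans' (by norm_num)

lemma log_one_add_sq_add_two_div_pi_le {n K : ℝ} (hn : 3 ≤ n) (hK : K = 400 * n * log n) :
    (log (1 + K ^ 2) + 2) / π ≤ 6 * log n := by
  have hL : 1 ≤ log n := (lt_log_of_three_le hn).le.trans' (by norm_num)
  have hLn : log n ≤ n := (log_le_sub_one_of_pos (by linarith)).trans (by linarith)
  have hK0 : 0 ≤ K := by rw [hK]; positivity
  have hKn : K ≤ 400 * n ^ 2 := by rw [hK]; nlinarith
  have hpow : 1 + K ^ 2 ≤ n ^ 16 := by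
    have h4 : 81 ≤ n ^ 4 := by nlinarith [pow_le_pow_left₀ (by norm_num) hn 4]
    have h12 : 531441 ≤ n ^ 12 := by nlinarith [pow_le_pow_left₀ (by norm_num) hn 12]
    calc 1 + K ^ 2 ≤ 1 + (400 * n ^ 2) ^ 2 := by gcongr
      _ ≤ n ^ 4 * n ^ 12 := by nlinarith
      _ = n ^ 16 := by ring
  have hlog : log (1 + K ^ 2) ≤ 16 * log n :=
    calc log (1 + K ^ 2) ≤ log (n ^ 16) := log_le_log (by positivity) hpow
      _ = 16 * log n := by rw [log_pow]; norm_num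
  rw [div_le_iff₀ pi_pos]
  nlinarith [pi_gt_three]

lemma mul_inv_add_div_sq_le_log_log_div_log {n K m : ℝ} (hn : 3 ≤ n) (hK : K = 400 * n * log n)
    (hm : m ≤ 6 * log n) :
    n * K⁻¹ + n * (4 * K / π) / (K - n * m) ^ 2 ≤ log (log n) / log n := by
  set L := log n
  have hL : 1.0986 < L := lt_log_of_three_le hn
  have hn0 : 0 < n := by linarith
  have hL0 : 0 < L := by linarith
  have hK0 : 0 < K := by rw [hK]; positivity
  have hgap : 394 * n * L ≤ K - n * m := by rw [hK]; nlinarith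
  have htail : n * K⁻¹ = 1 / (400 * L) := by rw [hK]; field_simp
  have hvar : n * (4 * K / π) / (K - n * m) ^ 2 ≤ 1 / (194 * L) := by
    calc n * (4 * K / π) / (K - n * m) ^ 2 ≤ n * (2 * K) / (394 * n * L) ^ 2 := by
          gcongr
          rw [div_le_iff₀ pi_pos]
          nlinarith [pi_gt_three]
      _ ≤ 1 / (194 * L) := by
          rw [hK, div_le_div_iff₀ (by positivity) (by positivity)]
          nlinarith [mul_pos hn0 hL0]
  have hlogL : 1 / 100 ≤ log L := by
    have := one_sub_inv_le_log_of_pos hL0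
    have : L⁻¹ < 1 / 1.0986 := by rw [inv_eq_one_div]; gcongr
    linarith
  calc n * K⁻¹ + n * (4 * K / π) / (K - n * m) ^ 2 ≤ 1 / (400 * L) + 1 / (194 * L) := by
        rw [htail]; gcongr
    _ ≤ 1 / 100 / L := by rw [div_add_div _ _ (by positivity) (by positivity), div_div,
          div_le_div_iff₀ (by positivity) (by positivity)]; nlinarith
    _ ≤ log L / L := by gcongr

/-- Upper tail bound for sums of absolute values of independent standard Cauchy
random variables: there is a universal constant `U` such that for all `n ≥ 3`,
`Pr[∑ |X_i| ≤ U n log n] ≥ 1 - (log log n)/(log n)`. -/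
theorem indep_cauchy_sum_upper :
    ∃ U : ℝ, 0 < U ∧
      ∀ {Ω : Type} {mΩ : MeasurableSpace Ω} (μ : Measure Ω), IsProbabilityMeasure μ →
        ∀ n : ℕ, 3 ≤ n →
          ∀ X : Fin n → Ω → ℝ,
            iIndepFun X μ →
            (∀ i, Measure.map (X i) μ = stdCauchy) →
            ENNReal.ofReal (1 - Real.log (Real.log n) / Real.log n) ≤
              μ {ω | ∑ i, |X i ω| ≤ U * n * Real.log n} := by
  refine ⟨400, by norm_num, fun μ _ n hn X hind hlaw => ?_⟩
  have hn' : (3 : ℝ) ≤ n := by exact_mod_cast hn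
  have hL : 1 < log n := (lt_log_of_three_le hn').trans' (by norm_num)
  set K := 400 * n * log n with hK
  have hK0 : 0 < K := by positivity
  have hm := log_one_add_sq_add_two_div_pi_le hn' hK
  have htail := measure_lt_sum_abs_stdCauchy_le hind hlaw hK0 (t := K) (by
    rw [Fintype.card_fin]; nlinarith)
  rw [Fintype.card_fin] at htail
  refine ofReal_one_sub_le_of_measure_compl_le (div_nonneg (log_nonneg hL.le) (by linarith)) ?_
  simp only [compl_ofPred, not_le]
  exact htail.trans (ENNReal.ofReal_le_ofReal (mul_inv_add_div_sq_le_log_log_div_log hn' hK hm))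
end

section
/- For 1 ≤ p < 2, let X_1, ..., X_n be (possibly dependent) p-stable random variables, and let γ_1, ..., γ_n > 0 with γ = Σ γ_i. Then there is a constant α_p depending only on p such that for any t ≥ 1 and n ≥ 3, Pr[Σ_{i=1}^n γ_i |X_i|^p > α_p γ t] ≤ 2 log(n t) / t. -/
/-!
By stability, `u ↦ φ (u ^ (1 / p))` is multiplicative on `[0, ∞)`, where `φ` is the characteristic
function of `D` (real-valued, since `D` is symmetric). A multiplicative function bounded by `1` is
`exp (-c u)`, so `1 - φ ξ ≤ K |ξ| ^ p`, and the classical truncation inequality for characteristic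
functions turns this into the weak-`L¹` tail `D {|x| ^ p > s} ≤ A / s`. By the layer-cake formula,
`E min (|X i| ^ p, M) ≤ 1 + A log M`. For `M = α n t`, a union bound controls the event that some
`|X i| ^ p` exceeds `M`, and Markov's inequality for `∑ γ i min (|X i| ^ p, M)` controls the rest;
neither step needs independence.
-/

open MeasureTheory ProbabilityTheory Finset

/-- A distribution `D` on ℝ is `p`-stable if for every linear combination with
coefficients `a`, the law of `∑ a_i X_i` (for i.i.d. `X_i ~ D`) equals the law of
`(∑ |a_i|^p)^{1/p} X` for `X ~ D`. -/
def IsPStable (p : ℝ) (D : Measure ℝ) : Prop :=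
  ∀ (n : ℕ) (a : Fin n → ℝ),
    (Measure.pi fun _ : Fin n => D).map (fun x => ∑ i, a i * x i) =
      D.map (fun x => (∑ i, |a i| ^ p) ^ (1 / p) * x)

open Complex

section MulOnNonneg

variable {ψ : ℝ → ℝ} (hψ : ∀ a b, 0 ≤ a → 0 ≤ b → ψ (a + b) = ψ a * ψ b)
include hψ

lemma nonneg_of_add_eq_mul {a : ℝ} (ha : 0 ≤ a) : 0 ≤ ψ a := by
  have h := hψ (a / 2) (a / 2) (by positivity) (by positivity)
  rw [add_halves] at h
  exact h ▸ mul_self_nonneg _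

lemma natCast_mul_of_add_eq_mul (h0 : ψ 0 = 1) {a : ℝ} (ha : 0 ≤ a) (n : ℕ) :
    ψ (n * a) = ψ a ^ n := by
  induction n with
  | zero => simpa using h0
  | succ n ih =>
    rw [Nat.cast_succ, add_one_mul, hψ _ _ (by positivity) ha, ih, pow_succ]

lemma antitoneOn_of_add_eq_mul (hle : ∀ a, 0 ≤ a → ψ a ≤ 1) : AntitoneOn ψ (Set.Ici 0) := by
  intro a ha b hb hab
  have h := hψ a (b - a) ha (sub_nonneg.2 hab)
  rw [add_sub_cancel] at h
  exact h ▸ mul_le_of_le_one_right (nonneg_of_add_eq_mul hψ ha) (hle _ (sub_nonneg.2 hab))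

lemma pos_of_add_eq_mul (h0 : ψ 0 = 1) (hle : ∀ a, 0 ≤ a → ψ a ≤ 1) {δ : ℝ} (hδ : 0 < δ)
    (hψδ : 0 < ψ δ) {a : ℝ} (ha : 0 ≤ a) : 0 < ψ a := by
  obtain ⟨n, hn⟩ := exists_nat_ge (a / δ)
  have ha_le : a ≤ n * δ := (div_le_iff₀ hδ).1 hn
  calc 0 < ψ δ ^ n := pow_pos hψδ n
    _ = ψ (n * δ) := (natCast_mul_of_add_eq_mul hψ h0 hδ.le n).symm
    _ ≤ ψ a := antitoneOn_of_add_eq_mul hψ hle ha (le_trans ha ha_le) ha_le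

lemma one_sub_le_mul_of_add_eq_mul (h0 : ψ 0 = 1) (hle : ∀ a, 0 ≤ a → ψ a ≤ 1) {δ : ℝ}
    (hδ : 0 < δ) (hψδ : 0 < ψ δ) : ∃ K, 0 ≤ K ∧ ∀ u, 0 ≤ u → 1 - ψ u ≤ K * u := by
  have hq : 0 < ψ 1 := pos_of_add_eq_mul hψ h0 hle hδ hψδ zero_le_one
  set c := -Real.log (ψ 1)
  have hc : 0 ≤ c := neg_nonneg.2 (Real.log_nonpos hq.le (hle 1 zero_le_one))
  have hroot : ∀ n : ℕ, 1 ≤ n → 1 - ψ (1 / n) ≤ c / n := by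
    intro n hn
    have hn0 : (n : ℝ) ≠ 0 := by positivity
    have hpow : ψ (1 / n) ^ n = ψ 1 := by
      rw [← natCast_mul_of_add_eq_mul hψ h0 (by positivity), mul_one_div_cancel hn0]
    have hexp : ψ (1 / n) = Real.exp (-c / n) := by
      rw [← Real.pow_rpow_inv_natCast (nonneg_of_add_eq_mul hψ (by positivity)) (by positivity),
        hpow, Real.rpow_def_of_pos hq, neg_neg, div_eq_mul_inv]
    rw [hexp]
    linarith [Real.add_one_le_exp (-c / n), neg_div (n : ℝ) c]
  refine ⟨1 + 2 * c, by positivity, fun u hu => ?_⟩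
  rcases hu.eq_or_lt with rfl | hu
  · simp [h0]
  rcases le_or_gt 1 u with hu1 | hu1
  · nlinarith [nonneg_of_add_eq_mul hψ hu.le]
  set n := ⌊1 / u⌋₊
  have hn : 1 ≤ n := Nat.le_floor (by rw [Nat.cast_one, le_div_iff₀ hu]; linarith)
  have hn' : (1 : ℝ) ≤ n := by exact_mod_cast hn
  have hun : u ≤ 1 / n := by
    rw [le_div_iff₀ (by positivity), ← le_div_iff₀' hu]; exact Nat.floor_le (by positivity)
  have hnu : 1 / u < n + 1 := Nat.lt_floor_add_one _
  have h2u : 1 / (n : ℝ) ≤ 2 * u := by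
    rw [div_lt_iff₀ hu] at hnu
    rw [div_le_iff₀ (by positivity)]; nlinarith
  calc 1 - ψ u ≤ 1 - ψ (1 / n) := by
        linarith [antitoneOn_of_add_eq_mul hψ hle (Set.mem_Ici.2 hu.le)
          (Set.mem_Ici.2 (by positivity)) hun]
    _ ≤ c * (1 / n) := by rw [mul_one_div]; exact hroot n hn
    _ ≤ c * (2 * u) := by gcongr
    _ ≤ (1 + 2 * c) * u := by nlinarith

end MulOnNonneg

lemma charFun_map_sum_mul_pi {n : ℕ} (D : Measure ℝ) [SigmaFinite D] (a : Fin n → ℝ) :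
    charFun ((Measure.pi fun _ : Fin n => D).map (fun x => ∑ i, a i * x i)) 1 =
      ∏ i, charFun D (a i) := by
  rw [charFun_apply_real, integral_map (Measurable.aemeasurable (by fun_prop)) (by fun_prop)]
  simp_rw [charFun_apply_real]
  rw [← integral_fintype_prod_eq_prod (fun i (x : ℝ) => cexp (a i * x * I))]
  simp_rw [← Complex.exp_sum, ofReal_sum, ofReal_one, one_mul, Finset.sum_mul, ofReal_mul]

lemma measureReal_abs_gt_le_of_norm_one_sub_charFun_le {μ : Measure ℝ} [IsProbabilityMeasure μ]
    {K p r : ℝ} (hK : 0 ≤ K) (hp : 0 ≤ p) (h : ∀ t, ‖1 - charFun μ t‖ ≤ K * |t| ^ p)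
    (hr : 0 < r) : μ.real {x | r < |x|} ≤ 2 * K * (2 / r) ^ p := by
  have hint : ‖∫ t in (-2 * r⁻¹)..(2 * r⁻¹), 1 - charFun μ t‖ ≤ K * (2 / r) ^ p * (4 / r) := by
    refine (intervalIntegral.norm_integral_le_of_norm_le_const (C := K * (2 / r) ^ p)
      fun t ht => ?_).trans_eq ?_
    · have ht' : |t| ≤ 2 / r := by
        rw [Set.uIoc_of_le (by linarith [inv_pos.2 hr])] at ht
        rw [div_eq_mul_inv]
        exact abs_le.2 ⟨by linarith [ht.1], ht.2⟩
      exact (h t).trans (by gcongr)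
    · rw [show 2 * r⁻¹ - -2 * r⁻¹ = 4 / r by ring, abs_of_pos (by positivity)]
  calc μ.real {x | r < |x|} ≤ 2⁻¹ * r * ‖∫ t in (-2 * r⁻¹)..(2 * r⁻¹), 1 - charFun μ t‖ :=
        measureReal_abs_gt_le_integral_charFun hr
    _ ≤ 2⁻¹ * r * (K * (2 / r) ^ p * (4 / r)) := by gcongr
    _ = 2 * K * (2 / r) ^ p := by field_simp; ring

namespace IsPStable

variable {p : ℝ} {D : Measure ℝ}

lemma charFun_rpow_sum_eq_prod [SigmaFinite D] (hD : IsPStable p D) {n : ℕ} (a : Fin n → ℝ) :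
    charFun D ((∑ i, |a i| ^ p) ^ (1 / p)) = ∏ i, charFun D (a i) := by
  rw [← charFun_map_sum_mul_pi, hD, charFun_map_mul, mul_one]

lemma charFun_abs [SigmaFinite D] (hp : p ≠ 0) (hD : IsPStable p D) (t : ℝ) :
    charFun D |t| = charFun D t := by
  simpa [← Real.rpow_mul (abs_nonneg t), mul_inv_cancel₀ hp] using
    hD.charFun_rpow_sum_eq_prod ![t]

lemma ofReal_re_charFun [SigmaFinite D] (hp : p ≠ 0) (hD : IsPStable p D) (t : ℝ) :
    ((charFun D t).re : ℂ) = charFun D t := by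
  rw [← conj_eq_iff_re, ← charFun_neg, ← hD.charFun_abs hp, abs_neg, hD.charFun_abs hp]

lemma charFun_rpow_add [SigmaFinite D] (hp : p ≠ 0) (hD : IsPStable p D) {a b : ℝ} (ha : 0 ≤ a)
    (hb : 0 ≤ b) :
    charFun D ((a + b) ^ (1 / p)) = charFun D (a ^ (1 / p)) * charFun D (b ^ (1 / p)) := by
  have h := hD.charFun_rpow_sum_eq_prod ![a ^ (1 / p), b ^ (1 / p)]
  simpa [abs_of_nonneg, Real.rpow_nonneg, ha, hb, ← Real.rpow_mul, one_div, inv_mul_cancel₀ hp]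
    using h

lemma norm_one_sub_charFun_le [IsProbabilityMeasure D] (hp : 0 < p) (hD : IsPStable p D) :
    ∃ K, 0 ≤ K ∧ ∀ t, ‖1 - charFun D t‖ ≤ K * |t| ^ p := by
  have hreal := hD.ofReal_re_charFun hp.ne'
  set ψ : ℝ → ℝ := fun u => (charFun D (u ^ (1 / p))).re
  have hψ : ∀ a b, 0 ≤ a → 0 ≤ b → ψ (a + b) = ψ a * ψ b := by
    intro a b ha hb
    simp only [ψ, hD.charFun_rpow_add hp.ne' ha hb]
    nth_rewrite 1 [← hreal (a ^ (1 / p)), ← hreal (b ^ (1 / p))]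
    rw [← ofReal_mul, ofReal_re]
  have h0 : ψ 0 = 1 := by simp [ψ, Real.zero_rpow (inv_ne_zero hp.ne')]
  have hle : ∀ a, 0 ≤ a → ψ a ≤ 1 := fun a _ => (re_le_norm _).trans (norm_charFun_le_one _)
  have hψ_rpow : ∀ ξ, 0 ≤ ξ → ψ (ξ ^ p) = (charFun D ξ).re := fun ξ hξ => by
    simp only [ψ, ← Real.rpow_mul hξ, mul_one_div_cancel hp.ne', Real.rpow_one]
  have hnear : ∀ᶠ ξ in nhds 0, 0 < (charFun D ξ).re :=
    continuousAt_const.eventually_lt (continuous_re.comp continuous_charFun).continuousAt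
      (by simp)
  obtain ⟨ξ, hξ, hξ0⟩ := ((hnear.filter_mono nhdsWithin_le_nhds).and
    (self_mem_nhdsWithin : Set.Ioi (0 : ℝ) ∈ nhdsWithin 0 (Set.Ioi 0))).exists
  obtain ⟨K, hK, hψK⟩ := one_sub_le_mul_of_add_eq_mul hψ h0 hle (Real.rpow_pos_of_pos hξ0 p)
    (by rwa [hψ_rpow ξ hξ0.le])
  refine ⟨K, hK, fun t => ?_⟩
  have ht := hψ_rpow |t| (abs_nonneg t)
  rw [← hD.charFun_abs hp.ne', ← hreal, ← ofReal_one, ← ofReal_sub, norm_real, Real.norm_eq_abs,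
    abs_of_nonneg (sub_nonneg.2 ((re_le_norm _).trans (norm_charFun_le_one _))), ← ht]
  exact hψK _ (by positivity)

lemma exists_measure_lt_abs_rpow_le [IsProbabilityMeasure D] (hp : 0 < p) (hD : IsPStable p D) :
    ∃ A, 0 ≤ A ∧ ∀ s, 0 < s → D {x | s < |x| ^ p} ≤ ENNReal.ofReal (A / s) := by
  obtain ⟨K, hK, hKt⟩ := hD.norm_one_sub_charFun_le hp
  refine ⟨2 * K * 2 ^ p, by positivity, fun s hs => ?_⟩
  have hset : {x : ℝ | s < |x| ^ p} = {x | s ^ p⁻¹ < |x|} := by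
    ext x
    exact (Real.rpow_inv_lt_iff_of_pos hs.le (abs_nonneg x) hp).symm
  rw [hset, ← ofReal_measureReal]
  refine ENNReal.ofReal_le_ofReal ((measureReal_abs_gt_le_of_norm_one_sub_charFun_le hK hp.le hKt
    (Real.rpow_pos_of_pos hs _)).trans_eq ?_)
  rw [Real.div_rpow zero_le_two (by positivity), ← Real.rpow_mul hs.le, inv_mul_cancel₀ hp.ne',
    Real.rpow_one, mul_div_assoc]

end IsPStable

lemma setLIntegral_ofReal_div_Ioc {A M : ℝ} (hA : 0 ≤ A) (hM : 1 ≤ M) :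
    ∫⁻ t in Set.Ioc 1 M, ENNReal.ofReal (A / t) = ENNReal.ofReal (A * Real.log M) := by
  have hint : IntegrableOn (fun t : ℝ => A / t) (Set.Ioc 1 M) :=
    (intervalIntegrable_iff_integrableOn_Ioc_of_le hM).1 <|
      (continuousOn_const.div continuousOn_id fun t ht =>
        (zero_lt_one.trans_le (Set.uIcc_of_le hM ▸ ht).1).ne').intervalIntegrable
  have hnonneg : 0 ≤ᵐ[volume.restrict (Set.Ioc 1 M)] fun t : ℝ => A / t :=
    (ae_restrict_iff' measurableSet_Ioc).2 <| ae_of_all _ fun t ht =>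
      div_nonneg hA (zero_le_one.trans ht.1.le)
  rw [← ofReal_integral_eq_lintegral_ofReal hint hnonneg, ← intervalIntegral.integral_of_le hM]
  simp_rw [div_eq_mul_inv]
  rw [intervalIntegral.integral_const_mul, integral_inv_of_pos one_pos (by linarith), div_one]

lemma lintegral_min_le_one_add_mul_log {α : Type*} [MeasurableSpace α] {μ : Measure α}
    [IsProbabilityMeasure μ] {f : α → ℝ} (hf : AEMeasurable f μ) (hf0 : 0 ≤ᵐ[μ] f) {A M : ℝ}
    (hA : 0 ≤ A) (hM : 1 ≤ M) (htail : ∀ s, 0 < s → μ {x | s < f x} ≤ ENNReal.ofReal (A / s)) :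
    ∫⁻ x, ENNReal.ofReal (min (f x) M) ∂μ ≤ ENNReal.ofReal (1 + A * Real.log M) := by
  set g := fun t : ℝ => μ {x | t < min (f x) M}
  have hsmall : ∫⁻ t in Set.Ioc 0 1, g t ≤ 1 :=
    (setLIntegral_mono measurable_const fun _ _ => prob_le_one).trans_eq (by simp)
  have hmiddle : ∫⁻ t in Set.Ioc 1 M, g t ≤ ENNReal.ofReal (A * Real.log M) := by
    rw [← setLIntegral_ofReal_div_Ioc hA hM]
    refine setLIntegral_mono (by fun_prop) fun t ht => ?_
    exact (measure_mono fun x (hx : t < min (f x) M) => hx.trans_le (min_le_left _ _)).trans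
      (htail t (by linarith [ht.1]))
  have hlarge : ∫⁻ t in Set.Ioi M, g t = 0 := by
    refine (setLIntegral_congr_fun measurableSet_Ioi fun t (ht : M < t) => ?_).trans lintegral_zero
    exact measure_mono_null (fun x (hx : t < min (f x) M) =>
      (ht.trans hx).trans_le (min_le_right _ _) |>.false) measure_empty
  have hsplit : Set.Ioi (0 : ℝ) = Set.Ioc 0 1 ∪ Set.Ioc 1 M ∪ Set.Ioi M := by
    rw [Set.Ioc_union_Ioc_eq_Ioc zero_le_one hM, Set.Ioc_union_Ioi_eq_Ioi (zero_le_one.trans hM)]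
  rw [lintegral_eq_lintegral_meas_lt μ
    (hf0.mono fun x (hx : 0 ≤ f x) => le_min hx (zero_le_one.trans hM))
    (hf.min aemeasurable_const), hsplit]
  calc ∫⁻ t in Set.Ioc 0 1 ∪ Set.Ioc 1 M ∪ Set.Ioi M, g t
      ≤ (∫⁻ t in Set.Ioc 0 1, g t) + (∫⁻ t in Set.Ioc 1 M, g t) + ∫⁻ t in Set.Ioi M, g t :=
        (lintegral_union_le _ _ _).trans (by gcongr; exact lintegral_union_le _ _ _)
    _ ≤ ENNReal.ofReal 1 + ENNReal.ofReal (A * Real.log M) + 0 := by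
        rw [ENNReal.ofReal_one]; exact add_le_add (add_le_add hsmall hmiddle) hlarge.le
    _ = ENNReal.ofReal (1 + A * Real.log M) := by
        rw [add_zero, ← ENNReal.ofReal_add zero_le_one
          (mul_nonneg hA (Real.log_nonneg hM))]

section DependentSum

variable {Ω ι : Type*} [MeasurableSpace Ω] [Fintype ι] {μ : Measure Ω} {Y : ι → Ω → ℝ} {A M : ℝ}

lemma measure_iUnion_lt_le (htail : ∀ i s, 0 < s → μ {ω | s < Y i ω} ≤ ENNReal.ofReal (A / s))
    (hM : 0 < M) : μ (⋃ i, {ω | M < Y i ω}) ≤ ENNReal.ofReal (Fintype.card ι * A / M) :=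
  calc μ (⋃ i, {ω | M < Y i ω}) ≤ ∑ i, μ {ω | M < Y i ω} := measure_iUnion_fintype_le _ _
    _ ≤ ∑ _i : ι, ENNReal.ofReal (A / M) := Finset.sum_le_sum fun i _ => htail i M hM
    _ = ENNReal.ofReal (Fintype.card ι * A / M) := by
      rw [Finset.sum_const, Finset.card_univ, nsmul_eq_mul, ← ENNReal.ofReal_natCast,
        ← ENNReal.ofReal_mul (Nat.cast_nonneg _), mul_div_assoc]

lemma measure_lt_sum_mul_min_le [IsProbabilityMeasure μ] (hY : ∀ i, AEMeasurable (Y i) μ)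
    (hY0 : ∀ i, 0 ≤ᵐ[μ] Y i) (hA : 0 ≤ A)
    (htail : ∀ i s, 0 < s → μ {ω | s < Y i ω} ≤ ENNReal.ofReal (A / s))
    {γ : ι → ℝ} (hγ : ∀ i, 0 ≤ γ i) (hM : 1 ≤ M) {c : ℝ} (hc : 0 < c) :
    μ {ω | c < ∑ i, γ i * min (Y i ω) M} ≤
      ENNReal.ofReal ((∑ i, γ i) * (1 + A * Real.log M) / c) := by
  set Z : Ω → ENNReal := fun ω => ∑ i, ENNReal.ofReal (γ i) * ENNReal.ofReal (min (Y i ω) M)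
  have hZi : ∀ i, AEMeasurable (fun ω => ENNReal.ofReal (min (Y i ω) M)) μ := fun i =>
    ENNReal.measurable_ofReal.comp_aemeasurable ((hY i).min aemeasurable_const)
  have hsub : {ω | c < ∑ i, γ i * min (Y i ω) M} ⊆ {ω | ENNReal.ofReal c ≤ Z ω} := by
    intro ω (hω : c < _)
    refine (ENNReal.ofReal_le_ofReal hω.le).trans ?_
    simp only [Z, ← ENNReal.ofReal_mul (hγ _)]
    exact Finset.le_sum_of_subadditive _ ENNReal.ofReal_zero.le
      (fun _ _ => ENNReal.ofReal_add_le) _ _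
  have hmoment : ∫⁻ ω, Z ω ∂μ ≤ ENNReal.ofReal ((∑ i, γ i) * (1 + A * Real.log M)) := by
    calc ∫⁻ ω, Z ω ∂μ = ∑ i, ENNReal.ofReal (γ i) * ∫⁻ ω, ENNReal.ofReal (min (Y i ω) M) ∂μ := by
          rw [lintegral_finsetSum' _ fun i _ => (hZi i).const_mul _]
          exact Finset.sum_congr rfl fun i _ => lintegral_const_mul' _ _ ENNReal.ofReal_ne_top
      _ ≤ ∑ i, ENNReal.ofReal (γ i) * ENNReal.ofReal (1 + A * Real.log M) := by
          gcongr with i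
          exact lintegral_min_le_one_add_mul_log (hY i) (hY0 i) hA hM (htail i)
      _ = ENNReal.ofReal ((∑ i, γ i) * (1 + A * Real.log M)) := by
          rw [← Finset.sum_mul, ← ENNReal.ofReal_sum_of_nonneg fun i _ => hγ i,
            ← ENNReal.ofReal_mul (Finset.sum_nonneg fun i _ => hγ i)]
  calc μ {ω | c < ∑ i, γ i * min (Y i ω) M} ≤ (∫⁻ ω, Z ω ∂μ) / ENNReal.ofReal c :=
        (measure_mono hsub).trans (meas_ge_le_lintegral_div
          (Finset.aemeasurable_fun_sum _ fun i _ => (hZi i).const_mul _) (by simpa using hc)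
          ENNReal.ofReal_ne_top)
    _ ≤ ENNReal.ofReal ((∑ i, γ i) * (1 + A * Real.log M) / c) := by
        rw [ENNReal.ofReal_div_of_pos hc]
        gcongr

lemma measure_lt_sum_mul_le [IsProbabilityMeasure μ] (hY : ∀ i, AEMeasurable (Y i) μ)
    (hY0 : ∀ i, 0 ≤ᵐ[μ] Y i) (hA : 0 ≤ A)
    (htail : ∀ i s, 0 < s → μ {ω | s < Y i ω} ≤ ENNReal.ofReal (A / s))
    {γ : ι → ℝ} (hγ : ∀ i, 0 ≤ γ i) (hM : 1 ≤ M) {c : ℝ} (hc : 0 < c) :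
    μ {ω | c < ∑ i, γ i * Y i ω} ≤
      ENNReal.ofReal (Fintype.card ι * A / M + (∑ i, γ i) * (1 + A * Real.log M) / c) := by
  have hsub : {ω | c < ∑ i, γ i * Y i ω} ⊆
      (⋃ i, {ω | M < Y i ω}) ∪ {ω | c < ∑ i, γ i * min (Y i ω) M} := by
    intro ω (hω : c < _)
    by_cases hbig : ∃ i, M < Y i ω
    · exact Or.inl (Set.mem_iUnion.2 hbig)
    simp only [not_exists, not_lt] at hbig
    refine Or.inr (?_ : c < _)
    simpa only [min_eq_left (hbig _)] using hω
  have hmoment_nonneg : 0 ≤ (∑ i, γ i) * (1 + A * Real.log M) / c :=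
    div_nonneg (mul_nonneg (Finset.sum_nonneg fun i _ => hγ i)
      (add_nonneg zero_le_one (mul_nonneg hA (Real.log_nonneg hM)))) hc.le
  rw [ENNReal.ofReal_add (by positivity) hmoment_nonneg]
  exact (measure_mono hsub).trans <| (measure_union_le _ _).trans <|
    add_le_add (measure_iUnion_lt_le htail (by linarith))
      (measure_lt_sum_mul_min_le hY hY0 hA htail hγ hM hc)

end DependentSum

lemma exists_add_one_add_mul_log_le {A : ℝ} (hA : 0 ≤ A) :
    ∃ α, A + 1 ≤ α ∧ A + 1 + A * Real.log α ≤ α := by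
  refine ⟨4 * (A + 1) ^ 2, by nlinarith, ?_⟩
  have hlog : Real.log (4 * (A + 1) ^ 2) ≤ 2 * (2 * (A + 1) - 1) := by
    rw [show 4 * (A + 1) ^ 2 = (2 * (A + 1)) ^ 2 by ring, Real.log_pow, Nat.cast_ofNat]
    gcongr
    exact Real.log_le_sub_one_of_pos (by positivity)
  nlinarith

lemma div_add_div_le_two_mul_log_div {A α Γ n t : ℝ} (hA : 0 ≤ A) (hAα : A + 1 ≤ α)
    (hα : A + 1 + A * Real.log α ≤ α) (hΓ : 0 < Γ) (hn : 3 ≤ n) (ht : 1 ≤ t) :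
    n * A / (α * n * t) + Γ * (1 + A * Real.log (α * n * t)) / (α * Γ * t) ≤
      2 * Real.log (n * t) / t := by
  have hα0 : 0 < α := by linarith
  have hL : 1 ≤ Real.log (n * t) := by
    rw [Real.le_log_iff_exp_le (by positivity)]
    nlinarith [Real.exp_one_lt_d9]
  set L := Real.log (n * t)
  rw [mul_assoc α, Real.log_mul hα0.ne' (by positivity)]
  have hsum : n * A / (α * (n * t)) + Γ * (1 + A * (Real.log α + L)) / (α * Γ * t) =
      (A + 1 + A * Real.log α + A * L) / (α * t) := by
    field_simp
    ring
  have hnum : A + 1 + A * Real.log α + A * L ≤ 2 * L * α := by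
    nlinarith [mul_le_mul_of_nonneg_right hAα (by linarith : 0 ≤ L)]
  rw [hsum, div_le_div_iff₀ (by positivity) (by positivity)]
  nlinarith

theorem dependent_p_stable_upper_tail_general (p : ℝ) (hp1 : 1 ≤ p)
    (D : Measure ℝ) [IsProbabilityMeasure D] (hD : IsPStable p D) :
    ∃ α : ℝ, 0 < α ∧
      ∀ {Ω : Type} {mΩ : MeasurableSpace Ω} (μ : Measure Ω), IsProbabilityMeasure μ →
        ∀ n : ℕ, 3 ≤ n →
          ∀ X : Fin n → Ω → ℝ, (∀ i, Measure.map (X i) μ = D) →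
            ∀ γ : Fin n → ℝ, (∀ i, 0 < γ i) →
              ∀ t : ℝ, 1 ≤ t →
                μ {ω | α * (∑ i, γ i) * t < ∑ i, γ i * |X i ω| ^ p} ≤
                  ENNReal.ofReal (2 * Real.log (n * t) / t) := by
  have hp : 0 < p := by linarith
  obtain ⟨A, hA, htail⟩ := hD.exists_measure_lt_abs_rpow_le hp
  obtain ⟨α, hAα, hα⟩ := exists_add_one_add_mul_log_le hA
  have hα1 : 1 ≤ α := by linarith
  refine ⟨α, by linarith, fun μ _ n hn X hX γ hγ t ht => ?_⟩
  have hXm : ∀ i, AEMeasurable (X i) μ := fun i =>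
    .of_map_ne_zero (by rw [hX i]; exact IsProbabilityMeasure.ne_zero D)
  have htailX : ∀ i s, 0 < s → μ {ω | s < |X i ω| ^ p} ≤ ENNReal.ofReal (A / s) := by
    intro i s hs
    have h := htail s hs
    rwa [← hX i, Measure.map_apply_of_aemeasurable (hXm i)
      (measurableSet_lt measurable_const (by fun_prop : Measurable fun x : ℝ => |x| ^ p))] at h
  have hn' : (3 : ℝ) ≤ n := by exact_mod_cast hn
  have hΓ : 0 < ∑ i, γ i := Finset.sum_pos (fun i _ => hγ i) ⟨⟨0, by omega⟩, Finset.mem_univ _⟩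
  refine (measure_lt_sum_mul_le (fun i => by fun_prop)
    (fun i => ae_of_all _ fun ω => Real.rpow_nonneg (abs_nonneg _) _) hA htailX
    (fun i => (hγ i).le) (M := α * n * t)
    (one_le_mul_of_one_le_of_one_le (one_le_mul_of_one_le_of_one_le hα1 (by linarith)) ht)
    (by positivity)).trans
    (ENNReal.ofReal_le_ofReal ?_)
  rw [Fintype.card_fin]
  exact div_add_div_le_two_mul_log_div hA hAα hα hΓ hn' ht

/-- Upper tail inequality for positive linear combinations of `p`-th powers of
possibly dependent `p`-stable random variables: there is `α_p` depending only on
`p` with `Pr[∑ γ_i |X_i|^p > α_p γ t] ≤ 2 log(n t) / t`. -/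
theorem dependent_p_stable_upper_tail (p : ℝ) (hp1 : 1 ≤ p) (hp2 : p < 2)
    (D : Measure ℝ) [IsProbabilityMeasure D] (hD : IsPStable p D) :
    ∃ α : ℝ, 0 < α ∧
      ∀ {Ω : Type} {mΩ : MeasurableSpace Ω} (μ : Measure Ω), IsProbabilityMeasure μ →
        ∀ n : ℕ, 3 ≤ n →
          ∀ X : Fin n → Ω → ℝ, (∀ i, Measure.map (X i) μ = D) →
            ∀ γ : Fin n → ℝ, (∀ i, 0 < γ i) →
              ∀ t : ℝ, 1 ≤ t →
                μ {ω | α * (∑ i, γ i) * t < ∑ i, γ i * |X i ω| ^ p} ≤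
                  ENNReal.ofReal (2 * Real.log (n * t) / t) :=
  dependent_p_stable_upper_tail_general p hp1 D hD
end

section
/- Let Π : R^n → R^m be a linear map, 1 ≤ p ≤ 2, and B = {Ax : ‖Ax‖_p = 1} the unit sphere of the column space of A ∈ R^{n×d}. Suppose N is a (1/(8(U/L)^{1/p}))-net of B such that for every y ∈ N, L^{1/p} ≤ ‖Πy‖_p ≤ U^{1/p} for constants 0 < L ≤ U. Then for every x ∈ R^d, (L/2)^{1/p} ‖Ax‖_p ≤ ‖ΠAx‖_p ≤ 2U^{1/p} ‖Ax‖_p. -/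
open Finset

/-- The entrywise `ℓ_p` norm on `Fin n → ℝ`. -/
noncomputable def pnorm {n : ℕ} (p : ℝ) (x : Fin n → ℝ) : ℝ :=
  (∑ i, |x i| ^ p) ^ (1 / p)

section lemmas
variable {n : ℕ} {p : ℝ} {x y : Fin n → ℝ}

lemma pnorm_sum_nonneg : 0 ≤ ∑ i, |x i| ^ p :=
  Finset.sum_nonneg fun i _ => Real.rpow_nonneg (abs_nonneg _) _

lemma pnorm_nonneg : 0 ≤ pnorm p x := Real.rpow_nonneg pnorm_sum_nonneg _

lemma pnorm_zero (hp : 0 < p) : pnorm p (0 : Fin n → ℝ) = 0 := by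
  unfold pnorm
  simp only [Pi.zero_apply, abs_zero, Real.zero_rpow hp.ne', Finset.sum_const, smul_zero]
  exact Real.zero_rpow (by positivity)

lemma pnorm_pos (hp : 0 < p) (hx : x ≠ 0) : 0 < pnorm p x := by
  rcases pnorm_nonneg.lt_or_eq with h | h
  · exact h
  exfalso
  apply hx
  have hs : ∑ i, |x i| ^ p = 0 :=
    ((Real.rpow_eq_zero_iff_of_nonneg pnorm_sum_nonneg).1 h.symm).1
  funext i
  have h1 := (Finset.sum_eq_zero_iff_of_nonneg
    (fun i _ => Real.rpow_nonneg (abs_nonneg _) _)).1 hs i (Finset.mem_univ i)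
  have h2 := ((Real.rpow_eq_zero_iff_of_nonneg (abs_nonneg _)).1 h1).1
  simpa using h2

lemma pnorm_smul (hp : 0 < p) (c : ℝ) : pnorm p (c • x) = |c| * pnorm p x := by
  unfold pnorm
  have h1 : ∀ i, |(c • x) i| ^ p = |c| ^ p * |x i| ^ p := by
    intro i
    rw [Pi.smul_apply, smul_eq_mul, abs_mul, Real.mul_rpow (abs_nonneg _) (abs_nonneg _)]
  simp only [h1, ← Finset.mul_sum]
  rw [Real.mul_rpow (by positivity) pnorm_sum_nonneg, ← Real.rpow_mul (abs_nonneg c),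
    mul_one_div_cancel hp.ne', Real.rpow_one]

lemma pnorm_add_le (hp : 1 ≤ p) : pnorm p (x + y) ≤ pnorm p x + pnorm p y := by
  have := Real.Lp_add_le Finset.univ x y hp
  simpa [pnorm] using this

lemma pnorm_sub_le (hp : 1 ≤ p) (z : Fin n → ℝ) :
    pnorm p x - pnorm p z ≤ pnorm p (x - z) := by
  have h : pnorm p x ≤ pnorm p (x - z) + pnorm p z := by
    have := pnorm_add_le (x := x - z) (y := z) hp
    simpa using this
  linarith

lemma pnorm_neg (hp : 0 < p) : pnorm p (-x) = pnorm p x := by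
  have := pnorm_smul (x := x) hp (-1)
  simpa using this

lemma pnorm_rpow (hp : 0 < p) : pnorm p x ^ p = ∑ i, |x i| ^ p := by
  unfold pnorm
  rw [← Real.rpow_mul pnorm_sum_nonneg, one_div_mul_cancel hp.ne', Real.rpow_one]

lemma pnorm_mono (hp : 0 < p) {w : Fin n → ℝ} (h : ∀ i, |x i| ≤ w i) :
    pnorm p x ≤ (∑ i, w i ^ p) ^ (1 / p) := by
  apply Real.rpow_le_rpow pnorm_sum_nonneg _ (by positivity)
  exact Finset.sum_le_sum fun i _ => Real.rpow_le_rpow (abs_nonneg _) (h i) hp.le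

end lemmas

set_option maxHeartbeats 2000000 in
/-- The net argument: if `Π` has distortion `[L^{1/p}, U^{1/p}]` on a fine enough net
of the `ℓ_p` unit sphere of the column space of `A`, then it has distortion
`[(L/2)^{1/p}, 2 U^{1/p}]` on the whole column space. -/
theorem net_argument (n d m : ℕ) (P : Matrix (Fin m) (Fin n) ℝ)
    (A : Matrix (Fin n) (Fin d) ℝ) (p L U : ℝ)
    (hp : 1 ≤ p) (hp2 : p ≤ 2) (hL : 0 < L) (hLU : L ≤ U)
    (N : Set (Fin n → ℝ))
    (hNB : N ⊆ {y : Fin n → ℝ | ∃ x : Fin d → ℝ, y = A.mulVec x ∧ pnorm p y = 1})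
    (hnet : ∀ y ∈ {y : Fin n → ℝ | ∃ x : Fin d → ℝ, y = A.mulVec x ∧ pnorm p y = 1},
      ∃ z ∈ N, pnorm p (y - z) ≤ 1 / (8 * (U / L) ^ (1 / p)))
    (hbound : ∀ y ∈ N,
      L ^ (1 / p) ≤ pnorm p (P.mulVec y) ∧ pnorm p (P.mulVec y) ≤ U ^ (1 / p)) :
    ∀ x : Fin d → ℝ,
      (L / 2) ^ (1 / p) * pnorm p (A.mulVec x) ≤ pnorm p (P.mulVec (A.mulVec x)) ∧
      pnorm p (P.mulVec (A.mulVec x)) ≤ 2 * U ^ (1 / p) * pnorm p (A.mulVec x) := by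
  have hp0 : 0 < p := lt_of_lt_of_le one_pos hp
  have hU : 0 < U := hL.trans_le hLU
  have hUp : (0:ℝ) < U ^ (1/p) := Real.rpow_pos_of_pos hU _
  have hLp : (0:ℝ) < L ^ (1/p) := Real.rpow_pos_of_pos hL _
  set ε : ℝ := 1 / (8 * (U / L) ^ (1 / p)) with hεdef
  have hULp : (1:ℝ) ≤ (U / L) ^ (1 / p) := by
    have h1 : (1:ℝ) ≤ U / L := (one_le_div hL).2 hLU
    have := Real.rpow_le_rpow zero_le_one h1 (by positivity : (0:ℝ) ≤ 1/p)
    simpa using this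
  have hεpos : 0 < ε := by
    rw [hεdef]; positivity
  have hε8 : ε ≤ 1/8 := by
    rw [hεdef]
    apply one_div_le_one_div_of_le (by norm_num)
    nlinarith
  have hε1 : ε < 1 := by linarith
  -- membership in B
  set inB : (Fin n → ℝ) → Prop := fun y => ∃ x : Fin d → ℝ, y = A.mulVec x ∧ pnorm p y = 1
    with hinB
  -- a priori bound
  set C : ℝ := (∑ i, (∑ j, |P i j|) ^ p) ^ (1/p) with hCdef
  have hC0 : 0 ≤ C := by
    rw [hCdef]
    apply Real.rpow_nonneg
    apply Finset.sum_nonneg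
    intro i _
    apply Real.rpow_nonneg
    exact Finset.sum_nonneg fun j _ => abs_nonneg _
  have hCb : ∀ y : Fin n → ℝ, pnorm p y = 1 → pnorm p (P.mulVec y) ≤ C := by
    intro y h1
    have hsum : ∑ j, |y j| ^ p = 1 := by
      have := pnorm_rpow (x := y) hp0
      rw [h1, Real.one_rpow] at this
      exact this.symm
    have habs : ∀ j, |y j| ≤ 1 := by
      intro j
      by_contra hc
      push_neg at hc
      have h2 : (1:ℝ) < |y j| ^ p :=
        (Real.one_lt_rpow_iff_of_pos (lt_trans one_pos hc)).2 (Or.inl ⟨hc, hp0⟩)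
      have h3 : |y j| ^ p ≤ ∑ j, |y j| ^ p :=
        Finset.single_le_sum (fun i _ => Real.rpow_nonneg (abs_nonneg _) _) (Finset.mem_univ j)
      rw [hsum] at h3
      linarith
    apply pnorm_mono hp0
    intro i
    have : |(P.mulVec y) i| ≤ ∑ j, |P i j| := by
      have h4 : (P.mulVec y) i = ∑ j, P i j * y j := by
        simp [Matrix.mulVec, dotProduct]
      rw [h4]
      refine (Finset.abs_sum_le_sum_abs _ _).trans (Finset.sum_le_sum fun j _ => ?_)
      rw [abs_mul]
      exact mul_le_of_le_one_right (abs_nonneg _) (habs j)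
    exact this
  -- decomposition step
  have step : ∀ y : Fin n → ℝ, inB y → ∃ z ∈ N, ∃ w : Fin n → ℝ, y = z + w ∧
      pnorm p w ≤ ε ∧ (w = 0 ∨ inB ((pnorm p w)⁻¹ • w)) := by
    intro y hy
    obtain ⟨z, hzN, hyz⟩ := hnet y hy
    obtain ⟨x1, hyx, hy1⟩ := hy
    obtain ⟨x2, hzx, hz1⟩ := hNB hzN
    refine ⟨z, hzN, y - z, by ring, hyz, ?_⟩
    by_cases hw : y - z = 0
    · exact Or.inl hw
    right
    set t := pnorm p (y - z) with htdef
    have ht : 0 < t := pnorm_pos hp0 hw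
    refine ⟨t⁻¹ • (x1 - x2), ?_, ?_⟩
    · rw [Matrix.mulVec_smul, Matrix.mulVec_sub, ← hyx, ← hzx]
    · rw [pnorm_smul hp0, ← htdef, abs_of_pos (by positivity)]
      field_simp
  -- upper bound with error term, by induction
  have upk : ∀ k : ℕ, ∀ y : Fin n → ℝ, inB y →
      pnorm p (P.mulVec y) ≤ 8/7 * U ^ (1/p) + ε ^ k * C := by
    intro k
    induction k with
    | zero =>
      rintro y ⟨x1, hyx, hy1⟩
      have := hCb y hy1
      simp only [pow_zero, one_mul]
      linarith
    | succ k ih =>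
      intro y hy
      obtain ⟨z, hzN, w, hyzw, hwε, hwcase⟩ := step y hy
      have hz := (hbound z hzN).2
      rcases hwcase with hw0 | hwB
      · rw [hyzw, hw0, add_zero]
        have : (0:ℝ) ≤ ε ^ (k+1) * C := by positivity
        linarith
      · set t := pnorm p w with htdef
        have ht0 : 0 ≤ t := pnorm_nonneg
        have hw0 : w ≠ 0 := by
          rintro rfl
          obtain ⟨_, _, h1⟩ := hwB
          rw [smul_zero, pnorm_zero hp0] at h1
          norm_num at h1
        have ht : 0 < t := pnorm_pos hp0 hw0
        have hPw : pnorm p (P.mulVec w) ≤ ε * (8/7 * U ^ (1/p) + ε ^ k * C) := by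
          have hwrite : P.mulVec w = t • P.mulVec (t⁻¹ • w) := by
            rw [← Matrix.mulVec_smul, smul_smul, mul_inv_cancel₀ ht.ne', one_smul]
          rw [hwrite, pnorm_smul hp0, abs_of_pos ht]
          have h5 := ih _ hwB
          have h6 : (0:ℝ) ≤ 8/7 * U ^ (1/p) + ε ^ k * C := by positivity
          exact mul_le_mul hwε h5 pnorm_nonneg hεpos.le
        have htri : pnorm p (P.mulVec y) ≤ pnorm p (P.mulVec z) + pnorm p (P.mulVec w) := by
          rw [hyzw, Matrix.mulVec_add]
          exact pnorm_add_le hp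
        have h8 : ε * U ^ (1/p) ≤ 1/8 * U ^ (1/p) := by
          have := mul_le_mul_of_nonneg_right hε8 hUp.le
          linarith
        have hexp : ε * (8/7 * U ^ (1/p) + ε ^ k * C)
            = 8/7 * (ε * U ^ (1/p)) + ε ^ (k+1) * C := by ring
        rw [hexp] at hPw
        linarith
  -- upper bound on B
  have upB : ∀ y : Fin n → ℝ, inB y → pnorm p (P.mulVec y) ≤ 8/7 * U ^ (1/p) := by
    intro y hy
    have hlim : Filter.Tendsto (fun k : ℕ => 8/7 * U ^ (1/p) + ε ^ k * C)
        Filter.atTop (nhds (8/7 * U ^ (1/p))) := by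
      have h1 : Filter.Tendsto (fun k : ℕ => ε ^ k) Filter.atTop (nhds 0) :=
        tendsto_pow_atTop_nhds_zero_of_lt_one hεpos.le hε1
      have h2 := Filter.Tendsto.add (tendsto_const_nhds (x := 8/7 * U ^ (1/p)))
        (h1.mul_const C)
      simpa using h2
    exact ge_of_tendsto' hlim fun k => upk k y hy
  -- key: ε * U^(1/p) = L^(1/p)/8
  have hεU : ε * U ^ (1/p) = L ^ (1/p) / 8 := by
    have hdiv : (U / L) ^ (1/p) = U ^ (1/p) / L ^ (1/p) := Real.div_rpow hU.le hL.le _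
    rw [hεdef, hdiv]
    field_simp
  -- (1/2)^(1/p) ≤ 6/7
  have hhalf : ((1:ℝ)/2) ^ (1/p) ≤ 6/7 := by
    have h1 : ((1:ℝ)/2) ^ (1/p) ≤ ((1:ℝ)/2) ^ ((1:ℝ)/2) := by
      apply Real.rpow_le_rpow_of_exponent_ge (by norm_num) (by norm_num)
      rw [div_le_div_iff₀ (by norm_num) hp0]
      linarith
    have h2 : ((1:ℝ)/2) ^ ((1:ℝ)/2) = Real.sqrt (1/2) := (Real.sqrt_eq_rpow _).symm
    have h3 : Real.sqrt (1/2) ≤ 6/7 := by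
      have h4 : Real.sqrt (1/2) ≤ Real.sqrt (36/49) :=
        Real.sqrt_le_sqrt (by norm_num)
      have h5 : Real.sqrt (36/49) = 6/7 := by
        rw [show (36/49:ℝ) = (6/7)^2 by norm_num]
        exact Real.sqrt_sq (by norm_num)
      linarith
    linarith
  have hL2 : (L/2) ^ (1/p) = L ^ (1/p) * ((1:ℝ)/2) ^ (1/p) := by
    rw [show L/2 = L * (1/2) by ring]
    exact Real.mul_rpow hL.le (by norm_num)
  -- lower bound on B
  have lowB : ∀ y : Fin n → ℝ, inB y → (L/2) ^ (1/p) ≤ pnorm p (P.mulVec y) := by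
    intro y hy
    have hL2le : (L/2) ^ (1/p) ≤ 6/7 * L ^ (1/p) := by
      calc (L/2) ^ (1/p) = L ^ (1/p) * ((1:ℝ)/2) ^ (1/p) := hL2
        _ ≤ L ^ (1/p) * (6/7) := mul_le_mul_of_nonneg_left hhalf hLp.le
        _ = 6/7 * L ^ (1/p) := by ring
    obtain ⟨z, hzN, w, hyzw, hwε, hwcase⟩ := step y hy
    have hz := (hbound z hzN).1
    have hPw : pnorm p (P.mulVec w) ≤ ε * (8/7 * U ^ (1/p)) := by
      rcases hwcase with hw0 | hwB
      · rw [hw0, Matrix.mulVec_zero, pnorm_zero hp0]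
        positivity
      · set t := pnorm p w with htdef
        have hw0 : w ≠ 0 := by
          rintro rfl
          obtain ⟨_, _, h1⟩ := hwB
          rw [smul_zero, pnorm_zero hp0] at h1
          norm_num at h1
        have ht : 0 < t := pnorm_pos hp0 hw0
        have hwrite : P.mulVec w = t • P.mulVec (t⁻¹ • w) := by
          rw [← Matrix.mulVec_smul, smul_smul, mul_inv_cancel₀ ht.ne', one_smul]
        rw [hwrite, pnorm_smul hp0, abs_of_pos ht]
        exact mul_le_mul hwε (upB _ hwB) pnorm_nonneg hεpos.le
    have htri : pnorm p (P.mulVec z) - pnorm p (P.mulVec y) ≤ pnorm p (P.mulVec w) := by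
      have h1 : P.mulVec z - P.mulVec y = -(P.mulVec w) := by
        rw [hyzw, Matrix.mulVec_add]; ring_nf
      have h2 := pnorm_sub_le (x := P.mulVec z) hp (P.mulVec y)
      rw [h1, pnorm_neg hp0] at h2
      exact h2
    have hεU87 : ε * (8/7 * U ^ (1/p)) = 8/7 * (L ^ (1/p) / 8) := by
      rw [← hεU]; ring
    linarith
  -- conclude
  intro x
  by_cases hAx : A.mulVec x = 0
  · rw [hAx, Matrix.mulVec_zero, pnorm_zero hp0]
    constructor <;> simp [pnorm_zero hp0]
  · set s := pnorm p (A.mulVec x) with hsdef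
    have hs : 0 < s := pnorm_pos hp0 hAx
    have huB : inB (s⁻¹ • A.mulVec x) := by
      refine ⟨s⁻¹ • x, by rw [Matrix.mulVec_smul], ?_⟩
      rw [pnorm_smul hp0, ← hsdef, abs_of_pos (by positivity)]
      field_simp
    have hkey : pnorm p (P.mulVec (A.mulVec x)) = s * pnorm p (P.mulVec (s⁻¹ • A.mulVec x)) := by
      have h1 : P.mulVec (A.mulVec x) = s • P.mulVec (s⁻¹ • A.mulVec x) := by
        rw [← Matrix.mulVec_smul, smul_smul, mul_inv_cancel₀ hs.ne', one_smul]
      rw [h1, pnorm_smul hp0, abs_of_pos hs]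
    have hup := upB _ huB
    have hlow := lowB _ huB
    rw [hkey]
    constructor
    · calc (L/2) ^ (1/p) * s ≤ pnorm p (P.mulVec (s⁻¹ • A.mulVec x)) * s :=
            mul_le_mul_of_nonneg_right hlow hs.le
        _ = s * pnorm p (P.mulVec (s⁻¹ • A.mulVec x)) := mul_comm _ _
    · have h1 : s * pnorm p (P.mulVec (s⁻¹ • A.mulVec x)) ≤ s * (8/7 * U ^ (1/p)) :=
        mul_le_mul_of_nonneg_left hup hs.le
      nlinarith
end
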